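/- arXiv:2006.10563 — 3 statements merged into one kernel-verified Lean document; each statement's English description precedes it below -/
import Mathlib

section
/- Let α ∈ (0,1), c₀ > 0, and let f : [c₀, ∞) → ℝ be continuously differentiable with f'(c₀) = 0, and suppose f' is absolutely continuous on a neighborhood of c₀. If lim_{b → c₀⁺} (d/db) ∫_{c₀}^{b} (b-p)^{α-1} f'(p) dp = Γ(α)·(α/(2c₀))², then lim_{x → c₀⁺} f'(x)/(x-c₀)^{1-α} = (α/(2c₀))²/Γ(2-α). -/
open Real MeasureTheory intervalIntegral Set Filter Topology

/-!
Write `I^p` for the Riemann–Liouville integral and `∂^β = (d/dx) ∘ I^(1-β)` for the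
Riemann–Liouville derivative, both based at `c₀`; the hypothesis on the limit says
`∂^(1-α) f' → (α/(2c₀))²`. Since `f'(c₀) = 0`, absolute continuity gives `f' = I^1 g`. The
semigroup law `I^p I^q = I^(p+q)` (Dirichlet's formula on the triangle `c₀ < t ≤ s ≤ x` plus the
Beta integral) yields `I^α f' = I^1 (I^α g)`, so by Lebesgue's differentiation theorem
`∂^(1-α) f' = I^α g` almost everywhere, and hence `I^(1-α) ∂^(1-α) f' = I^(1-α) I^α g = f'`.
Finally `I^β h x ~ L (x-c₀)^β / Γ(β+1)` as `x → c₀⁺` whenever `h → L`; apply this with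
`β = 1-α` and `h = ∂^(1-α) f'`.
-/

theorem integral_rpow_mul_one_sub_rpow {a b : ℝ} (ha : 0 < a) (hb : 0 < b) :
    ∫ x in (0 : ℝ)..1, x ^ (a - 1) * (1 - x) ^ (b - 1) = Gamma a * Gamma b / Gamma (a + b) := by
  have hcast : Complex.betaIntegral a b
      = ((∫ x in (0 : ℝ)..1, x ^ (a - 1) * (1 - x) ^ (b - 1) : ℝ) : ℂ) := by
    rw [Complex.betaIntegral, ← intervalIntegral.integral_ofReal]
    refine intervalIntegral.integral_congr fun x hx => ?_
    rw [uIcc_of_le zero_le_one] at hx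
    push_cast
    rw [Complex.ofReal_cpow hx.1, Complex.ofReal_cpow (sub_nonneg.2 hx.2)]
    push_cast
    ring
  have h := Complex.betaIntegral_eq_Gamma_mul_div a b (by simpa using ha) (by simpa using hb)
  rw [hcast, ← Complex.ofReal_add, Complex.Gamma_ofReal, Complex.Gamma_ofReal,
    Complex.Gamma_ofReal] at h
  exact_mod_cast h

theorem intervalIntegrable_sub_rpow {x r : ℝ} (a : ℝ) (hr : -1 < r) :
    IntervalIntegrable (fun t => (x - t) ^ r) volume a x := by
  simpa using (intervalIntegrable_rpow' (a := x - a) (b := 0) hr).comp_sub_left x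

theorem intervalIntegrable_sub_rpow_mul_sub_rpow {p q t x : ℝ} (hp : 0 < p) (hq : 0 < q)
    (htx : t < x) :
    IntervalIntegrable (fun s => (x - s) ^ (p - 1) * (s - t) ^ (q - 1)) volume t x := by
  obtain ⟨m, htm, hmx⟩ := exists_between htx
  have hleft : IntervalIntegrable (fun s => (s - t) ^ (q - 1)) volume t m := by
    simpa using
      (intervalIntegrable_rpow' (a := 0) (b := m - t) (by linarith : -1 < q - 1)).comp_sub_right t
  have hright : IntervalIntegrable (fun s => (x - s) ^ (p - 1)) volume m x :=
    intervalIntegrable_sub_rpow m (by linarith)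
  have hcont_left : ContinuousOn (fun s => (x - s) ^ (p - 1)) (uIcc t m) := by
    refine ContinuousOn.rpow_const (by fun_prop) fun s hs => Or.inl ?_
    rw [uIcc_of_le htm.le] at hs
    linarith [hs.2]
  have hcont_right : ContinuousOn (fun s => (s - t) ^ (q - 1)) (uIcc m x) := by
    refine ContinuousOn.rpow_const (by fun_prop) fun s hs => Or.inl ?_
    rw [uIcc_of_le hmx.le] at hs
    linarith [hs.1]
  exact (hleft.continuousOn_mul hcont_left).trans (hright.mul_continuousOn hcont_right)

theorem integral_sub_rpow_mul_sub_rpow {p q t x : ℝ} (hp : 0 < p) (hq : 0 < q) (htx : t < x) :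
    ∫ s in t..x, (x - s) ^ (p - 1) * (s - t) ^ (q - 1)
      = Gamma p * Gamma q / Gamma (p + q) * (x - t) ^ (p + q - 1) := by
  have hxt : 0 < x - t := sub_pos.2 htx
  have hsub := intervalIntegral.integral_comp_mul_add
    (fun s => (x - s) ^ (p - 1) * (s - t) ^ (q - 1)) hxt.ne' t (a := 0) (b := 1)
  simp only [mul_zero, zero_add, mul_one, sub_add_cancel] at hsub
  have hscaled :
      ∫ u in (0 : ℝ)..1, (x - ((x - t) * u + t)) ^ (p - 1) * ((x - t) * u + t - t) ^ (q - 1)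
      = (x - t) ^ (p - 1) * (x - t) ^ (q - 1) * (Gamma q * Gamma p / Gamma (q + p)) := by
    rw [← integral_rpow_mul_one_sub_rpow hq hp, ← intervalIntegral.integral_const_mul]
    refine intervalIntegral.integral_congr fun u hu => ?_
    rw [uIcc_of_le zero_le_one] at hu
    rw [show x - ((x - t) * u + t) = (x - t) * (1 - u) by ring,
      show (x - t) * u + t - t = (x - t) * u by ring,
      mul_rpow hxt.le (sub_nonneg.2 hu.2), mul_rpow hxt.le hu.1]
    ring
  rw [hscaled, smul_eq_mul, eq_comm, inv_mul_eq_iff_eq_mul₀ hxt.ne'] at hsub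
  rw [hsub, show p + q - 1 = 1 + (p - 1) + (q - 1) by ring, rpow_add hxt, rpow_add hxt,
    rpow_one, add_comm q p]
  ring

/-- The Riemann–Liouville fractional integral `I_a^p g` of order `p`, based at `a`. -/
noncomputable def rlIntegral (a p : ℝ) (g : ℝ → ℝ) (x : ℝ) : ℝ :=
  (Gamma p)⁻¹ * ∫ t in a..x, (x - t) ^ (p - 1) * g t

section rlIntegral

variable {a p x : ℝ} {g : ℝ → ℝ}

theorem rlIntegral_one (a : ℝ) (g : ℝ → ℝ) (x : ℝ) : rlIntegral a 1 g x = ∫ t in a..x, g t := by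
  simp [rlIntegral]

theorem rlIntegral_const (hp : 0 < p) (hax : a < x) (c : ℝ) :
    rlIntegral a p (fun _ => c) x = c * (x - a) ^ p / Gamma (p + 1) := by
  have hkernel :
      ∫ t in a..x, (x - t) ^ (p - 1) * c = c * (Gamma p / Gamma (p + 1) * (x - a) ^ p) := by
    have h := integral_sub_rpow_mul_sub_rpow hp one_pos hax
    simp only [sub_self, rpow_zero, mul_one, Gamma_one, add_sub_cancel_right] at h
    rw [intervalIntegral.integral_mul_const, h, mul_comm]
  rw [rlIntegral, hkernel]
  field_simp [(Gamma_pos_of_pos hp).ne']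

theorem rlIntegral_congr_ae {g' : ℝ → ℝ} (hax : a ≤ x)
    (hgg' : g =ᵐ[volume.restrict (Ioc a x)] g') :
    rlIntegral a p g x = rlIntegral a p g' x := by
  rw [rlIntegral, rlIntegral, intervalIntegral.integral_of_le hax,
    intervalIntegral.integral_of_le hax,
    MeasureTheory.integral_congr_ae (hgg'.mono fun t ht => by rw [ht])]

theorem rlIntegral_sub_const (hp : 0 < p) (hax : a < x)
    (hg : IntervalIntegrable (fun t => (x - t) ^ (p - 1) * g t) volume a x) (c : ℝ) :
    rlIntegral a p (fun t => g t - c) x = rlIntegral a p g x - c * (x - a) ^ p / Gamma (p + 1) := by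
  have hker : IntervalIntegrable (fun t => (x - t) ^ (p - 1) * c) volume a x :=
    (intervalIntegrable_sub_rpow a (by linarith : -1 < p - 1)).mul_const c
  rw [← rlIntegral_const hp hax]
  simp only [rlIntegral, mul_sub, intervalIntegral.integral_sub hg hker]

theorem abs_rlIntegral_le {C : ℝ} (hp : 0 < p) (hax : a < x) (hC : ∀ t ∈ Ioc a x, |g t| ≤ C) :
    |rlIntegral a p g x| ≤ C * (x - a) ^ p / Gamma (p + 1) := by
  have hΓ := Gamma_pos_of_pos hp
  have hC0 : 0 ≤ C := (abs_nonneg _).trans (hC x ⟨hax, le_rfl⟩)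
  have hbound : ∀ᵐ t ∂volume.restrict (uIoc a x),
      ‖(x - t) ^ (p - 1) * g t‖ ≤ (x - t) ^ (p - 1) * C := by
    rw [uIoc_of_le hax.le]
    refine (ae_restrict_iff' measurableSet_Ioc).2 (Eventually.of_forall fun t ht => ?_)
    have hker : 0 ≤ (x - t) ^ (p - 1) := rpow_nonneg (sub_nonneg.2 ht.2) _
    rw [norm_mul, norm_of_nonneg hker]
    exact mul_le_mul_of_nonneg_left (hC t ht) hker
  calc |rlIntegral a p g x| = (Gamma p)⁻¹ * ‖∫ t in a..x, (x - t) ^ (p - 1) * g t‖ := by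
        rw [rlIntegral, abs_mul, abs_of_pos (inv_pos.2 hΓ), Real.norm_eq_abs]
    _ ≤ (Gamma p)⁻¹ * |∫ t in a..x, (x - t) ^ (p - 1) * C| := by
        gcongr
        exact norm_integral_le_abs_of_norm_le hbound
          ((intervalIntegrable_sub_rpow a (by linarith)).mul_const C)
    _ = C * (x - a) ^ p / Gamma (p + 1) := by
        rw [← abs_of_pos (inv_pos.2 hΓ), ← abs_mul, ← rlIntegral, rlIntegral_const hp hax,
          abs_of_nonneg (div_nonneg (mul_nonneg hC0 (rpow_nonneg (sub_nonneg.2 hax.le) p))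
            (Gamma_pos_of_pos (by linarith)).le)]

end rlIntegral

noncomputable def dirichletIntegrand (x p q : ℝ) (g : ℝ → ℝ) : ℝ × ℝ → ℝ :=
  {z : ℝ × ℝ | z.2 ≤ z.1}.indicator fun z => (x - z.1) ^ (p - 1) * (z.1 - z.2) ^ (q - 1) * g z.2

section Dirichlet

variable {a x p q : ℝ} {g : ℝ → ℝ}

theorem measurable_dirichletIntegrand (hg : Measurable g) :
    Measurable (dirichletIntegrand x p q g) :=
  Measurable.indicator (by fun_prop) (measurableSet_le measurable_snd measurable_fst)

theorem abs_dirichletIntegrand {s t : ℝ} (hsx : s ≤ x) :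
    |dirichletIntegrand x p q g (s, t)| = dirichletIntegrand x p q (fun t => |g t|) (s, t) := by
  by_cases hts : t ≤ s
  · have hmem : (s, t) ∈ {z : ℝ × ℝ | z.2 ≤ z.1} := hts
    simp only [dirichletIntegrand, indicator_of_mem hmem, abs_mul,
      abs_of_nonneg (rpow_nonneg (sub_nonneg.2 hsx) _),
      abs_of_nonneg (rpow_nonneg (sub_nonneg.2 hts) _)]
  · simp [dirichletIntegrand, hts]

theorem integrableOn_and_integral_dirichletIntegrand_fst (hp : 0 < p) (hq : 0 < q) {t : ℝ}
    (ht : t ∈ Ioo a x) :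
    IntegrableOn (fun s => dirichletIntegrand x p q g (s, t)) (Ioo a x) ∧
    ∫ s in Ioo a x, dirichletIntegrand x p q g (s, t)
      = Gamma p * Gamma q / Gamma (p + q) * (x - t) ^ (p + q - 1) * g t := by
  have hslice : (fun s => dirichletIntegrand x p q g (s, t))
      = (Ici t).indicator fun s => (x - s) ^ (p - 1) * (s - t) ^ (q - 1) * g t := by
    ext s
    simp only [dirichletIntegrand, indicator_apply, mem_ofPred_eq, mem_Ici]
  have hinter : Ioo a x ∩ Ici t = Ico t x := by
    ext s
    simp only [mem_inter_iff, mem_Ioo, mem_Ici, mem_Ico]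
    constructor
    · rintro ⟨⟨-, hsx⟩, hts⟩
      exact ⟨hts, hsx⟩
    · rintro ⟨hts, hsx⟩
      exact ⟨⟨ht.1.trans_le hts, hsx⟩, hts⟩
  rw [hslice, IntegrableOn, integrable_indicator_iff measurableSet_Ici, IntegrableOn,
    Measure.restrict_restrict measurableSet_Ici, inter_comm, hinter, ← IntegrableOn,
    integrableOn_Ico_iff_integrableOn_Ioo, ← integrableOn_Ioc_iff_integrableOn_Ioo,
    setIntegral_indicator measurableSet_Ici, hinter, integral_Ico_eq_integral_Ioo,
    ← integral_Ioc_eq_integral_Ioo, ← intervalIntegral.integral_of_le ht.2.le,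
    intervalIntegral.integral_mul_const, integral_sub_rpow_mul_sub_rpow hp hq ht.2]
  exact ⟨((intervalIntegrable_sub_rpow_mul_sub_rpow hp hq ht.2).mul_const (g t)).1, rfl⟩

theorem integral_dirichletIntegrand_snd {s : ℝ} (hs : s ∈ Ioo a x) :
    ∫ t in Ioo a x, dirichletIntegrand x p q g (s, t)
      = (x - s) ^ (p - 1) * ∫ t in a..s, (s - t) ^ (q - 1) * g t := by
  have hslice : (fun t => dirichletIntegrand x p q g (s, t))
      = (Iic s).indicator fun t => (x - s) ^ (p - 1) * ((s - t) ^ (q - 1) * g t) := by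
    ext t
    simp only [dirichletIntegrand, indicator_apply, mem_ofPred_eq, mem_Iic, mul_assoc]
  have hinter : Ioo a x ∩ Iic s = Ioc a s := by
    ext t
    simp only [mem_inter_iff, mem_Ioo, mem_Iic, mem_Ioc]
    constructor
    · rintro ⟨⟨hat, -⟩, hts⟩
      exact ⟨hat, hts⟩
    · rintro ⟨hat, hts⟩
      exact ⟨⟨hat, hts.trans_lt hs.2⟩, hts⟩
  rw [hslice, setIntegral_indicator measurableSet_Iic, hinter, MeasureTheory.integral_const_mul,
    intervalIntegral.integral_of_le hs.1.le]

theorem integrable_dirichletIntegrand (hp : 0 < p) (hq : 0 < q) (hpq : 1 ≤ p + q)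
    (hg : Measurable g) (hgi : IntegrableOn g (Ioo a x)) :
    Integrable (dirichletIntegrand x p q g)
      ((volume.restrict (Ioo a x)).prod (volume.restrict (Ioo a x))) := by
  have hB : 0 ≤ Gamma p * Gamma q / Gamma (p + q) := by
    have := Gamma_pos_of_pos hp
    have := Gamma_pos_of_pos hq
    have := Gamma_pos_of_pos (add_pos hp hq)
    positivity
  have hmem : ∀ᵐ t ∂volume.restrict (Ioo a x), t ∈ Ioo a x := ae_restrict_mem measurableSet_Ioo
  refine (integrable_prod_iff' (measurable_dirichletIntegrand hg).aestronglyMeasurable).2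
    ⟨?_, ?_⟩
  · filter_upwards [hmem] with t ht
    exact (integrableOn_and_integral_dirichletIntegrand_fst hp hq ht).1
  · have hmeas : AEStronglyMeasurable
        (fun t => ∫ s in Ioo a x, ‖dirichletIntegrand x p q g (s, t)‖)
        (volume.restrict (Ioo a x)) :=
      ((measurable_dirichletIntegrand hg).norm.comp measurable_swap).aestronglyMeasurable
        |>.integral_prod_right'
    refine (hgi.norm.const_mul (Gamma p * Gamma q / Gamma (p + q) * (x - a) ^ (p + q - 1))).mono'
      hmeas ?_
    filter_upwards [hmem] with t ht
    have hnorm : ∫ s in Ioo a x, ‖dirichletIntegrand x p q g (s, t)‖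
        = Gamma p * Gamma q / Gamma (p + q) * (x - t) ^ (p + q - 1) * |g t| := by
      rw [← (integrableOn_and_integral_dirichletIntegrand_fst (g := fun t => |g t|) hp hq ht).2]
      refine setIntegral_congr_fun measurableSet_Ioo fun s hs => ?_
      rw [Real.norm_eq_abs, abs_dirichletIntegrand hs.2.le]
    have hkernel : (x - t) ^ (p + q - 1) ≤ (x - a) ^ (p + q - 1) :=
      rpow_le_rpow (sub_nonneg.2 ht.2.le) (by linarith [ht.1]) (by linarith)
    rw [hnorm, Real.norm_eq_abs, abs_of_nonneg
      (mul_nonneg (mul_nonneg hB (rpow_nonneg (sub_nonneg.2 ht.2.le) _)) (abs_nonneg _)),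
      Real.norm_eq_abs]
    gcongr

theorem integrableOn_sub_rpow_mul_integral (hp : 0 < p) (hq : 0 < q) (hpq : 1 ≤ p + q)
    (hg : Measurable g) (hgi : IntegrableOn g (Ioc a x)) :
    IntegrableOn (fun s => (x - s) ^ (p - 1) * ∫ t in a..s, (s - t) ^ (q - 1) * g t) (Ioc a x) := by
  rw [integrableOn_Ioc_iff_integrableOn_Ioo]
  refine (integrable_dirichletIntegrand hp hq hpq hg (hgi.mono_set Ioo_subset_Ioc_self)
    |>.integral_prod_left).congr ?_
  exact (ae_restrict_iff' measurableSet_Ioo).2 (Eventually.of_forall fun s hs =>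
    integral_dirichletIntegrand_snd hs)

theorem integral_sub_rpow_mul_integral_sub_rpow (hp : 0 < p) (hq : 0 < q) (hpq : 1 ≤ p + q)
    (hax : a ≤ x) (hg : Measurable g) (hgi : IntegrableOn g (Ioc a x)) :
    ∫ s in a..x, (x - s) ^ (p - 1) * ∫ t in a..s, (s - t) ^ (q - 1) * g t
      = Gamma p * Gamma q / Gamma (p + q) * ∫ t in a..x, (x - t) ^ (p + q - 1) * g t := by
  have hint := integrable_dirichletIntegrand hp hq hpq hg (hgi.mono_set Ioo_subset_Ioc_self)
  calc ∫ s in a..x, (x - s) ^ (p - 1) * ∫ t in a..s, (s - t) ^ (q - 1) * g t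
      = ∫ s in Ioo a x, ∫ t in Ioo a x, dirichletIntegrand x p q g (s, t) := by
        rw [intervalIntegral.integral_of_le hax, integral_Ioc_eq_integral_Ioo]
        exact setIntegral_congr_fun measurableSet_Ioo fun s hs =>
          (integral_dirichletIntegrand_snd hs).symm
    _ = ∫ t in Ioo a x, ∫ s in Ioo a x, dirichletIntegrand x p q g (s, t) := by
        rw [← integral_prod _ hint, integral_prod_symm _ hint]
    _ = ∫ t in Ioo a x, Gamma p * Gamma q / Gamma (p + q) * ((x - t) ^ (p + q - 1) * g t) := by
        refine setIntegral_congr_fun measurableSet_Ioo fun t ht => ?_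
        rw [(integrableOn_and_integral_dirichletIntegrand_fst hp hq ht).2, mul_assoc]
    _ = _ := by
        rw [MeasureTheory.integral_const_mul, intervalIntegral.integral_of_le hax,
          integral_Ioc_eq_integral_Ioo]

end Dirichlet

section Semigroup

variable {a x p q : ℝ} {g : ℝ → ℝ}

theorem exists_measurable_rlIntegral_eq (hgi : IntegrableOn g (Ioc a x)) :
    ∃ g' : ℝ → ℝ, Measurable g' ∧ IntegrableOn g' (Ioc a x) ∧
      ∀ s ∈ Icc a x, ∀ q, rlIntegral a q g s = rlIntegral a q g' s := by
  refine ⟨hgi.aestronglyMeasurable.mk g, hgi.aestronglyMeasurable.stronglyMeasurable_mk.measurable,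
    hgi.congr hgi.aestronglyMeasurable.ae_eq_mk, fun s hs q => rlIntegral_congr_ae hs.1 ?_⟩
  exact ae_restrict_of_ae_restrict_of_subset (Ioc_subset_Ioc_right hs.2)
    hgi.aestronglyMeasurable.ae_eq_mk

theorem integrableOn_sub_rpow_mul_rlIntegral (hp : 0 < p) (hq : 0 < q) (hpq : 1 ≤ p + q)
    (hgi : IntegrableOn g (Ioc a x)) :
    IntegrableOn (fun s => (x - s) ^ (p - 1) * rlIntegral a q g s) (Ioc a x) := by
  obtain ⟨g', hg', hgi', hgg'⟩ := exists_measurable_rlIntegral_eq hgi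
  refine ((integrableOn_sub_rpow_mul_integral hp hq hpq hg' hgi').const_mul (Gamma q)⁻¹).congr ?_
  refine (ae_restrict_iff' measurableSet_Ioc).2 (Eventually.of_forall fun s hs => ?_)
  dsimp only
  rw [hgg' s (Ioc_subset_Icc_self hs), rlIntegral]
  ring

theorem rlIntegral_rlIntegral (hp : 0 < p) (hq : 0 < q) (hpq : 1 ≤ p + q) (hax : a ≤ x)
    (hgi : IntegrableOn g (Ioc a x)) :
    rlIntegral a p (rlIntegral a q g) x = rlIntegral a (p + q) g x := by
  obtain ⟨g', hg', hgi', hgg'⟩ := exists_measurable_rlIntegral_eq hgi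
  have hinner : rlIntegral a p (rlIntegral a q g) x = rlIntegral a p (rlIntegral a q g') x :=
    rlIntegral_congr_ae hax ((ae_restrict_iff' measurableSet_Ioc).2
      (Eventually.of_forall fun s hs => hgg' s (Ioc_subset_Icc_self hs) q))
  rw [hinner, hgg' x ⟨hax, le_rfl⟩, rlIntegral]
  simp only [rlIntegral, mul_left_comm _ (Gamma q)⁻¹, intervalIntegral.integral_const_mul]
  rw [integral_sub_rpow_mul_integral_sub_rpow hp hq hpq hax hg' hgi']
  field_simp [(Gamma_pos_of_pos hp).ne', (Gamma_pos_of_pos hq).ne']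

end Semigroup

theorem tendsto_rlIntegral_div_rpow {a p L : ℝ} {h : ℝ → ℝ} (hp : 0 < p)
    (hm : AEStronglyMeasurable h volume) (hh : Tendsto h (𝓝[>] a) (𝓝 L)) :
    Tendsto (fun x => rlIntegral a p h x / (x - a) ^ p) (𝓝[>] a) (𝓝 (L / Gamma (p + 1))) := by
  have hsmall : Tendsto (fun x => rlIntegral a p (fun s => h s - L) x / (x - a) ^ p)
      (𝓝[>] a) (𝓝 0) := by
    refine Metric.tendsto_nhds.2 fun ε hε => ?_
    obtain ⟨b, hab, hb⟩ := mem_nhdsGT_iff_exists_Ioc_subset.1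
      (Metric.tendsto_nhds.1 hh (ε * Gamma (p + 1) / 2) (by positivity))
    filter_upwards [Ioc_mem_nhdsGT hab] with x hx
    have hxa : 0 < (x - a) ^ p := rpow_pos_of_pos (sub_pos.2 hx.1) p
    have hclose : ∀ s ∈ Ioc a x, |h s - L| ≤ ε * Gamma (p + 1) / 2 := fun s hs =>
      (show |h s - L| < _ from Real.dist_eq (h s) L ▸ hb ⟨hs.1, hs.2.trans hx.2⟩).le
    have hle := abs_rlIntegral_le (g := fun s => h s - L) hp hx.1 hclose
    rw [dist_zero_right, norm_div, Real.norm_eq_abs, Real.norm_eq_abs, abs_of_pos hxa,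
      div_lt_iff₀ hxa]
    calc _ ≤ _ := hle
      _ = ε / 2 * (x - a) ^ p := by field_simp
      _ < ε * (x - a) ^ p := by linarith [mul_pos hε hxa]
  have hsplit : ∀ᶠ x in 𝓝[>] a, rlIntegral a p (fun s => h s - L) x / (x - a) ^ p
      + L / Gamma (p + 1) = rlIntegral a p h x / (x - a) ^ p := by
    obtain ⟨b, hab, hb⟩ := mem_nhdsGT_iff_exists_Ioc_subset.1 (Metric.tendsto_nhds.1 hh 1 one_pos)
    filter_upwards [Ioc_mem_nhdsGT hab] with x hx
    have hker := intervalIntegrable_sub_rpow (x := x) a (by linarith : -1 < p - 1)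
    have hbdd : ∀ᵐ s ∂volume.restrict (Ioc a x), ‖h s‖ ≤ |L| + 1 := by
      refine (ae_restrict_iff' measurableSet_Ioc).2 (Eventually.of_forall fun s hs => ?_)
      have hclose : |h s - L| < 1 := Real.dist_eq (h s) L ▸ hb ⟨hs.1, hs.2.trans hx.2⟩
      rw [Real.norm_eq_abs]
      linarith [abs_sub_abs_le_abs_sub (h s) L]
    have hkh : IntervalIntegrable (fun s => (x - s) ^ (p - 1) * h s) volume a x :=
      (intervalIntegrable_iff_integrableOn_Ioc_of_le hx.1.le).2
        (hker.1.mul_bdd hm.restrict hbdd)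
    have hxa : 0 < (x - a) ^ p := rpow_pos_of_pos (sub_pos.2 hx.1) p
    rw [rlIntegral_sub_const hp hx.1 hkh]
    field_simp
    ring
  have hshift : Tendsto (fun x => rlIntegral a p (fun s => h s - L) x / (x - a) ^ p
      + L / Gamma (p + 1)) (𝓝[>] a) (𝓝 (L / Gamma (p + 1))) := by
    simpa using hsmall.add_const (L / Gamma (p + 1))
  exact hshift.congr' hsplit

theorem ae_deriv_eq_of_eqOn_integral {F h : ℝ → ℝ} {a b : ℝ} (hh : IntervalIntegrable h volume a b)
    (hF : EqOn F (fun x => ∫ t in a..x, h t) (Ioo a b)) :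
    ∀ᵐ x, x ∈ Ioo a b → deriv F x = h x := by
  filter_upwards [hh.ae_hasDerivAt_integral] with x hx hxab
  have hmem : x ∈ uIcc a b := Icc_subset_uIcc (Ioo_subset_Icc_self hxab)
  refine ((hx hmem a left_mem_uIcc).congr_of_eventuallyEq ?_).deriv
  filter_upwards [Ioo_mem_nhds hxab.1 hxab.2] with y hy using hF hy

/-- The Riemann–Liouville derivative `∂_a^β φ` of order `β`. -/
noncomputable def rlDeriv (a β : ℝ) (φ : ℝ → ℝ) : ℝ → ℝ :=
  deriv (rlIntegral a (1 - β) φ)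

section rlDeriv

variable {a b β : ℝ} {g φ : ℝ → ℝ}

theorem ae_rlDeriv_eq_rlIntegral (hβ : β < 1) (hab : a ≤ b) (hgi : IntegrableOn g (Ioc a b))
    (hφ : ∀ x ∈ Icc a b, φ x = ∫ t in a..x, g t) :
    ∀ᵐ s, s ∈ Ioo a b → rlDeriv a β φ s = rlIntegral a (1 - β) g s := by
  have hint : IntervalIntegrable (rlIntegral a (1 - β) g) volume a b := by
    refine (intervalIntegrable_iff_integrableOn_Ioc_of_le hab).2 ?_
    simpa using integrableOn_sub_rpow_mul_rlIntegral one_pos (by linarith) (by linarith) hgi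
  refine ae_deriv_eq_of_eqOn_integral hint fun y hy => ?_
  have hgy := hgi.mono_set (Ioc_subset_Ioc_right hy.2.le)
  calc rlIntegral a (1 - β) φ y = rlIntegral a (1 - β) (rlIntegral a 1 g) y :=
        rlIntegral_congr_ae hy.1.le ((ae_restrict_iff' measurableSet_Ioc).2
          (Eventually.of_forall fun s hs => by
            rw [hφ s ⟨hs.1.le, hs.2.trans hy.2.le⟩, rlIntegral_one]))
    _ = rlIntegral a 1 (rlIntegral a (1 - β) g) y := by
        rw [rlIntegral_rlIntegral (by linarith) one_pos (by linarith) hy.1.le hgy,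
          rlIntegral_rlIntegral one_pos (by linarith) (by linarith) hy.1.le hgy, add_comm]
    _ = ∫ s in a..y, rlIntegral a (1 - β) g s := rlIntegral_one _ _ _

theorem rlIntegral_rlDeriv (hβ0 : 0 < β) (hβ1 : β < 1) (hgi : IntegrableOn g (Ioc a b))
    (hφ : ∀ x ∈ Icc a b, φ x = ∫ t in a..x, g t) {x : ℝ} (hx : x ∈ Ioo a b) :
    rlIntegral a β (rlDeriv a β φ) x = φ x := by
  have hsemi := rlIntegral_rlIntegral hβ0 (by linarith : 0 < 1 - β) (by linarith) hx.1.le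
    (hgi.mono_set (Ioc_subset_Ioc_right hx.2.le))
  rw [add_sub_cancel, rlIntegral_one] at hsemi
  rw [hφ x (Ioo_subset_Icc_self hx), ← hsemi]
  refine rlIntegral_congr_ae hx.1.le ?_
  filter_upwards [ae_restrict_of_ae (ae_rlDeriv_eq_rlIntegral hβ1 (hx.1.trans hx.2).le hgi hφ),
    ae_restrict_mem measurableSet_Ioc] with s hs hsx
  exact hs ⟨hsx.1, hsx.2.trans_lt hx.2⟩

end rlDeriv

theorem stmt1_general (α c₀ : ℝ) (hα0 : 0 < α) (hα1 : α < 1)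
    (f : ℝ → ℝ)
    (hf'0 : deriv f c₀ = 0)
    -- `f'` absolutely continuous on a neighborhood of `c₀`:
    (hAC : ∃ δ > 0, ∃ g : ℝ → ℝ, IntervalIntegrable g volume c₀ (c₀ + δ) ∧
      ∀ x ∈ Set.Icc c₀ (c₀ + δ), deriv f x = deriv f c₀ + ∫ t in c₀..x, g t)
    (hlim : Tendsto (deriv (fun b => ∫ p in c₀..b, (b - p) ^ (α - 1) * deriv f p))
      (𝓝[>] c₀) (𝓝 (Real.Gamma α * (α / (2 * c₀)) ^ 2))) :
    Tendsto (fun x => deriv f x / (x - c₀) ^ (1 - α)) (𝓝[>] c₀)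
      (𝓝 ((α / (2 * c₀)) ^ 2 / Real.Gamma (2 - α))) := by
  obtain ⟨δ, hδ, g, hg, hf'⟩ := hAC
  have hΓ : Gamma α ≠ 0 := (Gamma_pos_of_pos hα0).ne'
  have hprim : ∀ x ∈ Icc c₀ (c₀ + δ), deriv f x = ∫ t in c₀..x, g t := fun x hx => by
    rw [hf' x hx, hf'0, zero_add]
  have hF : (fun b => ∫ p in c₀..b, (b - p) ^ (α - 1) * deriv f p)
      = fun b => Gamma α * rlIntegral c₀ α (deriv f) b := by
    funext b
    rw [rlIntegral, mul_inv_cancel_left₀ hΓ]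
  have hderiv : Tendsto (rlDeriv c₀ (1 - α) (deriv f)) (𝓝[>] c₀) (𝓝 ((α / (2 * c₀)) ^ 2)) := by
    rw [hF, deriv_const_mul_field'] at hlim
    simpa [rlDeriv, hΓ] using hlim.const_mul (Gamma α)⁻¹
  have habel := tendsto_rlIntegral_div_rpow (p := 1 - α) (h := rlDeriv c₀ (1 - α) (deriv f))
    (by linarith) (measurable_deriv _).aestronglyMeasurable hderiv
  rw [show 1 - α + 1 = 2 - α by ring] at habel
  refine habel.congr' ?_
  filter_upwards [Ioo_mem_nhdsGT (by linarith : c₀ < c₀ + δ)] with x hx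
  rw [rlIntegral_rlDeriv (by linarith) (by linarith) hg.1 hprim hx]

/-- If `f` is `C¹` on `[c₀,∞)` with `f'(c₀) = 0`, `f'` absolutely continuous near `c₀`,
and `(d/db) ∫_{c₀}^{b} (b-p)^{α-1} f'(p) dp → Γ(α)·(α/(2c₀))²` as `b → c₀⁺`, then
`f'(x)/(x-c₀)^{1-α} → (α/(2c₀))²/Γ(2-α)` as `x → c₀⁺`. -/
theorem stmt1 (α c₀ : ℝ) (hα0 : 0 < α) (hα1 : α < 1) (hc₀ : 0 < c₀)
    (f : ℝ → ℝ) (hf : ContDiffOn ℝ 1 f (Set.Ici c₀))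
    (hf'0 : deriv f c₀ = 0)
    -- `f'` absolutely continuous on a neighborhood of `c₀`:
    (hAC : ∃ δ > 0, ∃ g : ℝ → ℝ, IntervalIntegrable g volume c₀ (c₀ + δ) ∧
      ∀ x ∈ Set.Icc c₀ (c₀ + δ), deriv f x = deriv f c₀ + ∫ t in c₀..x, g t)
    (hlim : Tendsto (deriv (fun b => ∫ p in c₀..b, (b - p) ^ (α - 1) * deriv f p))
      (𝓝[>] c₀) (𝓝 (Real.Gamma α * (α / (2 * c₀)) ^ 2))) :
    Tendsto (fun x => deriv f x / (x - c₀) ^ (1 - α)) (𝓝[>] c₀)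
      (𝓝 ((α / (2 * c₀)) ^ 2 / Real.Gamma (2 - α))) :=
  stmt1_general α c₀ hα0 hα1 f hf'0 hAC hlim
end

section
/- Let α ∈ (0,1), c₁ > 0 and set N(p,y) = Σ_{n=1}^∞ Mₙ(p,y). For every R > 0, the series converges uniformly on W_R = {(p,y) : 0 ≤ y ≤ p ≤ R}, and N is continuous, nonnegative and bounded on W_R; moreover N(p,y) > 0 whenever 0 ≤ y < p. -/
open Real MeasureTheory intervalIntegral Set Filter Topology

/-- `M₁(p,y) = (1/Γ(1-α)) ∫_y^p (1 - p^{-2/α} μ^{2/α})^{-α} dμ`. -/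
noncomputable def Mone (α p y : ℝ) : ℝ :=
  (1 / Real.Gamma (1 - α)) * ∫ μ in y..p, (1 - p ^ (-(2/α)) * μ ^ (2/α)) ^ (-α)

/-- The kernels `Mₙ` (here `Mker α n` is `Mₙ` for `n ≥ 1`; `Mker α 0 := 0` is unused). -/
noncomputable def Mker (α : ℝ) : ℕ → ℝ → ℝ → ℝ
  | 0 => fun _ _ => 0
  | 1 => fun p y => Mone α p y
  | (n+2) => fun p y => ∫ a in y..p, Mone α a y * Mker α (n+1) p a

/-- `N(p,y) = Σ_{n=1}^∞ Mₙ(p,y)`, as a function of the pair `(p,y)`. -/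
noncomputable def Nker (α : ℝ) (q : ℝ × ℝ) : ℝ :=
  ∑' n : ℕ, Mker α (n + 1) q.1 q.2

/-!
The substitution `μ = p t` gives `M₁(p,y) = Γ(1-α)⁻¹ p ∫_{y/p}^1 (1 - t^{2/α})^{-α} dt`; the density
is dominated by `(1-t)^{-α}`, which is integrable since `α < 1`. Clamping `y/p` into `[0,1]` turns
this formula into a kernel `K` that is continuous on all of `ℝ²`, nonnegative, positive for
`0 ≤ y < p`, and equal to `M₁` on the wedge `0 ≤ y ≤ p`, where the `Mₙ` are the iterated Volterra
integrals of `K`. These iterates are continuous, and if `K ≤ C` on the compact triangle `W_R` then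
`0 ≤ Mₙ₊₁(p,y) ≤ C^{n+1} (p-y)^n / n!` there. The Weierstrass M-test against `C (CR)^n / n!` gives
uniform convergence, hence continuity and boundedness of `N`, and `N ≥ M₁ > 0` off the diagonal.
-/

noncomputable def volterraIter (K : ℝ → ℝ → ℝ) : ℕ → ℝ → ℝ → ℝ
  | 0 => K
  | n + 1 => fun p y => ∫ a in y..p, K a y * volterraIter K n p a

theorem integral_sub_pow_div_factorial (p y : ℝ) (n : ℕ) :
    ∫ a in y..p, (p - a) ^ n / n.factorial = (p - y) ^ (n + 1) / (n + 1).factorial := by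
  rw [intervalIntegral.integral_div, intervalIntegral.integral_comp_sub_left (fun x => x ^ n),
    sub_self, integral_pow, Nat.factorial_succ]
  push_cast
  field_simp
  simp

section VolterraIter

variable {K : ℝ → ℝ → ℝ}

theorem volterraIter_congr {K' : ℝ → ℝ → ℝ} (h : ∀ p y, 0 ≤ y → y ≤ p → K p y = K' p y) :
    ∀ n {p y : ℝ}, 0 ≤ y → y ≤ p → volterraIter K n p y = volterraIter K' n p y
  | 0, p, y, hy, hyp => h p y hy hyp
  | n + 1, p, y, hy, hyp => integral_congr fun a ha => by
    rw [uIcc_of_le hyp] at ha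
    rw [h a y hy ha.1, volterraIter_congr h n (hy.trans ha.1) ha.2]

theorem continuous_volterraIter (hK : Continuous (Function.uncurry K)) :
    ∀ n, Continuous (Function.uncurry (volterraIter K n))
  | 0 => hK
  | n + 1 => by
    set F : ℝ × ℝ → ℝ → ℝ := fun q a => K a q.2 * volterraIter K n q.1 a
    have hF : Continuous (Function.uncurry F) :=
      (hK.comp (continuous_snd.prodMk continuous_fst.snd)).mul
        ((continuous_volterraIter hK n).comp (continuous_fst.fst.prodMk continuous_snd))
    have hFi : ∀ q b, IntervalIntegrable (F q) volume 0 b := fun q _ =>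
      (hF.comp (Continuous.prodMk_right q)).intervalIntegrable _ _
    have hprim : ∀ {s : ℝ × ℝ → ℝ}, Continuous s →
        Continuous fun q => ∫ a in (0 : ℝ)..s q, F q a :=
      continuous_parametric_intervalIntegral_of_continuous hF
    refine ((hprim continuous_fst).sub (hprim continuous_snd)).congr fun q => ?_
    exact integral_interval_sub_left (hFi q q.1) (hFi q q.2)

theorem volterraIter_nonneg (hK : ∀ p y, 0 ≤ y → y ≤ p → 0 ≤ K p y) :
    ∀ n {p y : ℝ}, 0 ≤ y → y ≤ p → 0 ≤ volterraIter K n p y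
  | 0, p, y, hy, hyp => hK p y hy hyp
  | n + 1, _, y, hy, hyp => integral_nonneg hyp fun a ha =>
    mul_nonneg (hK a y hy ha.1) (volterraIter_nonneg hK n (hy.trans ha.1) ha.2)

theorem volterraIter_le (hK : Continuous (Function.uncurry K))
    (hK0 : ∀ p y, 0 ≤ y → y ≤ p → 0 ≤ K p y) {R C : ℝ}
    (hC : ∀ p y, 0 ≤ y → y ≤ p → p ≤ R → K p y ≤ C) :
    ∀ n {p y : ℝ}, 0 ≤ y → y ≤ p → p ≤ R →
      volterraIter K n p y ≤ C ^ (n + 1) * ((p - y) ^ n / n.factorial)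
  | 0, p, y, hy, hyp, hpR => by simpa [volterraIter] using hC p y hy hyp hpR
  | n + 1, p, y, hy, hyp, hpR => by
    have hC0 : 0 ≤ C := (hK0 p y hy hyp).trans (hC p y hy hyp hpR)
    have hcont : Continuous fun a => K a y * volterraIter K n p a :=
      (hK.comp (continuous_id.prodMk continuous_const)).mul
        ((continuous_volterraIter hK n).comp (continuous_const.prodMk continuous_id))
    calc volterraIter K (n + 1) p y
        ≤ ∫ a in y..p, C * (C ^ (n + 1) * ((p - a) ^ n / n.factorial)) := by
          refine integral_mono_on hyp (hcont.intervalIntegrable _ _)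
            (by apply Continuous.intervalIntegrable; fun_prop) fun a ha => ?_
          exact mul_le_mul (hC a y hy ha.1 (ha.2.trans hpR))
            (volterraIter_le hK hK0 hC n (hy.trans ha.1) ha.2 hpR)
            (volterraIter_nonneg hK0 n (hy.trans ha.1) ha.2) hC0
      _ = C ^ (n + 2) * ((p - y) ^ (n + 1) / (n + 1).factorial) := by
          rw [intervalIntegral.integral_const_mul, intervalIntegral.integral_const_mul,
            integral_sub_pow_div_factorial]
          ring

end VolterraIter

def triangle (R : ℝ) : Set (ℝ × ℝ) := {q | 0 ≤ q.2 ∧ q.2 ≤ q.1 ∧ q.1 ≤ R}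

noncomputable def volterraSeries (K : ℝ → ℝ → ℝ) (q : ℝ × ℝ) : ℝ :=
  ∑' n, volterraIter K n q.1 q.2

section VolterraSeries

variable {K : ℝ → ℝ → ℝ}

theorem exists_summable_bound_volterraIter (hK : Continuous (Function.uncurry K))
    (hK0 : ∀ p y, 0 ≤ y → y ≤ p → 0 ≤ K p y) (R : ℝ) :
    ∃ u : ℕ → ℝ, Summable u ∧ ∀ n, ∀ q ∈ triangle R, ‖volterraIter K n q.1 q.2‖ ≤ u n := by
  obtain ⟨C, hC⟩ := (isCompact_Icc (a := ((0 : ℝ), (0 : ℝ))) (b := (R, R)))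
    |>.exists_bound_of_continuousOn hK.continuousOn
  have hKC : ∀ p y, 0 ≤ y → y ≤ p → p ≤ R → K p y ≤ C := fun p y hy hyp hpR =>
    (le_abs_self _).trans (hC (p, y) ⟨⟨hy.trans hyp, hy⟩, hpR, hyp.trans hpR⟩)
  refine ⟨fun n => C * ((C * R) ^ n / n.factorial),
    (Real.summable_pow_div_factorial _).mul_left C, fun n q ⟨hy, hyp, hpR⟩ => ?_⟩
  have hC0 : 0 ≤ C := (hK0 _ _ hy hyp).trans (hKC _ _ hy hyp hpR)
  rw [Real.norm_of_nonneg (volterraIter_nonneg hK0 n hy hyp)]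
  calc _ ≤ C ^ (n + 1) * ((q.1 - q.2) ^ n / n.factorial) :=
        volterraIter_le hK hK0 hKC n hy hyp hpR
    _ ≤ C ^ (n + 1) * (R ^ n / n.factorial) := by
      gcongr
      linarith
    _ = C * ((C * R) ^ n / n.factorial) := by ring

theorem tendstoUniformlyOn_volterraSeries (hK : Continuous (Function.uncurry K))
    (hK0 : ∀ p y, 0 ≤ y → y ≤ p → 0 ≤ K p y) (R : ℝ) :
    TendstoUniformlyOn (fun k q => ∑ n ∈ Finset.range k, volterraIter K n q.1 q.2)
      (volterraSeries K) atTop (triangle R) :=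
  have ⟨_, hu, hbound⟩ := exists_summable_bound_volterraIter hK hK0 R
  tendstoUniformlyOn_tsum_nat hu hbound

theorem continuousOn_volterraSeries (hK : Continuous (Function.uncurry K))
    (hK0 : ∀ p y, 0 ≤ y → y ≤ p → 0 ≤ K p y) (R : ℝ) :
    ContinuousOn (volterraSeries K) (triangle R) :=
  (tendstoUniformlyOn_volterraSeries hK hK0 R).continuousOn <| Frequently.of_forall fun _ =>
    (continuous_finsetSum _ fun n _ => continuous_volterraIter hK n).continuousOn

theorem volterraSeries_nonneg (hK0 : ∀ p y, 0 ≤ y → y ≤ p → 0 ≤ K p y) {p y : ℝ}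
    (hy : 0 ≤ y) (hyp : y ≤ p) : 0 ≤ volterraSeries K (p, y) :=
  tsum_nonneg fun n => volterraIter_nonneg hK0 n hy hyp

theorem exists_abs_volterraSeries_le (hK : Continuous (Function.uncurry K))
    (hK0 : ∀ p y, 0 ≤ y → y ≤ p → 0 ≤ K p y) (R : ℝ) :
    ∃ C, ∀ q ∈ triangle R, |volterraSeries K q| ≤ C := by
  obtain ⟨u, hu, hbound⟩ := exists_summable_bound_volterraIter hK hK0 R
  exact ⟨∑' n, u n, fun q hq => tsum_of_norm_bounded hu.hasSum fun n => hbound n q hq⟩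

theorem volterraSeries_pos (hK : Continuous (Function.uncurry K))
    (hK0 : ∀ p y, 0 ≤ y → y ≤ p → 0 ≤ K p y) {p y : ℝ} (hy : 0 ≤ y) (hyp : y ≤ p)
    (hpos : 0 < K p y) : 0 < volterraSeries K (p, y) := by
  obtain ⟨u, hu, hbound⟩ := exists_summable_bound_volterraIter hK hK0 p
  have hsum : Summable fun n => volterraIter K n p y :=
    .of_norm_bounded hu fun n => hbound n (p, y) ⟨hy, hyp, le_rfl⟩
  exact hpos.trans_le (hsum.le_tsum 0 fun n _ => volterraIter_nonneg hK0 n hy hyp)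

end VolterraSeries

theorem continuous_perspective_of_bounded {h : ℝ → ℝ} (hh : Continuous h) {B : ℝ}
    (hB : ∀ x, ‖h x‖ ≤ B) : Continuous fun q : ℝ × ℝ => q.1 * h (q.2 / q.1) := by
  refine continuous_iff_continuousAt.2 fun q₀ => ?_
  rcases eq_or_ne q₀.1 0 with hq₀ | hq₀
  · have hfst : Tendsto Prod.fst (𝓝 q₀) (𝓝 0) := hq₀ ▸ continuousAt_fst
    simpa [ContinuousAt, hq₀] using
      hfst.zero_mul_isBoundedUnder_le (isBoundedUnder_of ⟨B, fun q => hB _⟩)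
  · exact continuousAt_fst.mul (hh.continuousAt.comp (continuousAt_snd.div continuousAt_fst hq₀))

noncomputable def Mdensity (α t : ℝ) : ℝ := (1 - t ^ (2 / α)) ^ (-α)

noncomputable def MoneExt (α p y : ℝ) : ℝ :=
  (1 / Gamma (1 - α)) * (p * ∫ t in (projIcc 0 1 zero_le_one (y / p) : ℝ)..1, Mdensity α t)

section Mdensity

variable {α : ℝ}

theorem Mdensity_nonneg (hα0 : 0 < α) {t : ℝ} (ht0 : 0 ≤ t) (ht1 : t ≤ 1) :
    0 ≤ Mdensity α t :=
  rpow_nonneg (sub_nonneg.2 (rpow_le_one ht0 ht1 (by positivity))) _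

theorem Mdensity_pos (hα0 : 0 < α) {t : ℝ} (ht0 : 0 ≤ t) (ht1 : t < 1) : 0 < Mdensity α t :=
  rpow_pos_of_pos (sub_pos.2 (rpow_lt_one ht0 ht1 (by positivity))) _

theorem Mdensity_le (hα0 : 0 < α) (hα1 : α < 1) {t : ℝ} (ht0 : 0 ≤ t) (ht1 : t < 1) :
    Mdensity α t ≤ (1 - t) ^ (-α) := by
  have hs : t ^ (2 / α) ≤ t ^ (1 : ℝ) :=
    rpow_le_rpow_of_exponent_ge' ht0 ht1.le zero_le_one (by rw [le_div_iff₀ hα0]; linarith)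
  rw [rpow_one] at hs
  exact rpow_le_rpow_of_nonpos (by linarith) (by linarith) (by linarith)

theorem intervalIntegrable_Mdensity (hα0 : 0 < α) (hα1 : α < 1) :
    IntervalIntegrable (Mdensity α) volume 0 1 := by
  have hmaj : IntervalIntegrable (fun t : ℝ => (1 - t) ^ (-α)) volume 0 1 := by
    have := (intervalIntegrable_rpow' (show -1 < -α by linarith) (a := 0) (b := 1)).comp_sub_left 1
    simpa using this.symm
  have hmeas : Measurable (Mdensity α) := by unfold Mdensity; fun_prop
  refine hmaj.mono_fun' hmeas.aestronglyMeasurable ?_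
  rw [uIoc_of_le zero_le_one]
  refine ae_restrict_of_forall_mem measurableSet_Ioc fun t ⟨ht0, ht1⟩ => ?_
  show ‖Mdensity α t‖ ≤ (1 - t) ^ (-α)
  rcases ht1.lt_or_eq with ht1 | rfl
  · rw [norm_of_nonneg (Mdensity_nonneg hα0 ht0.le ht1.le)]
    exact Mdensity_le hα0 hα1 ht0.le ht1
  · simp [Mdensity, zero_rpow (neg_ne_zero.2 hα0.ne')]

theorem continuousOn_integral_Mdensity (hα0 : 0 < α) (hα1 : α < 1) :
    ContinuousOn (fun x => ∫ t in x..1, Mdensity α t) (Icc 0 1) := by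
  rw [← uIcc_of_le zero_le_one]
  exact continuousOn_primitive_interval_left
    ((intervalIntegrable_iff' enorm_ne_top).1 (intervalIntegrable_Mdensity hα0 hα1))

end Mdensity

theorem projIcc_div_eq {p y : ℝ} (hy : 0 ≤ y) (hyp : y ≤ p) (hp : 0 < p) :
    (projIcc 0 1 zero_le_one (y / p) : ℝ) = y / p := by
  rw [projIcc_of_mem _ ⟨div_nonneg hy hp.le, (div_le_one hp).2 hyp⟩]

theorem one_div_Gamma_one_sub_pos {α : ℝ} (hα1 : α < 1) : 0 < 1 / Gamma (1 - α) :=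
  one_div_pos.2 (Gamma_pos_of_pos (by linarith))

section MoneExt

variable {α : ℝ}

theorem continuous_MoneExt (hα0 : 0 < α) (hα1 : α < 1) :
    Continuous (Function.uncurry (MoneExt α)) := by
  have hT := continuousOn_integral_Mdensity hα0 hα1
  obtain ⟨B, hB⟩ := isCompact_Icc.exists_bound_of_continuousOn hT
  have hproj : Continuous fun x : ℝ => (projIcc 0 1 zero_le_one x : ℝ) :=
    continuous_subtype_val.comp continuous_projIcc
  exact continuous_const.mul <| continuous_perspective_of_bounded
    (hT.comp_continuous hproj fun x => (projIcc 0 1 _ x).2) fun x => hB _ (projIcc 0 1 _ x).2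

theorem MoneExt_nonneg (hα0 : 0 < α) (hα1 : α < 1) {p : ℝ} (hp : 0 ≤ p) (y : ℝ) :
    0 ≤ MoneExt α p y := by
  have hx := (projIcc 0 1 zero_le_one (y / p)).2
  refine mul_nonneg (one_div_Gamma_one_sub_pos hα1).le (mul_nonneg hp ?_)
  exact integral_nonneg hx.2 fun t ht => Mdensity_nonneg hα0 (hx.1.trans ht.1) ht.2

theorem MoneExt_pos (hα0 : 0 < α) (hα1 : α < 1) {p y : ℝ} (hy : 0 ≤ y) (hyp : y < p) :
    0 < MoneExt α p y := by
  have hp : 0 < p := hy.trans_lt hyp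
  have hyp0 : 0 ≤ y / p := div_nonneg hy hp.le
  have hyp1 : y / p < 1 := (div_lt_one hp).2 hyp
  rw [MoneExt, projIcc_div_eq hy hyp.le hp]
  refine mul_pos (one_div_Gamma_one_sub_pos hα1) (mul_pos hp ?_)
  refine intervalIntegral_pos_of_pos_on ((intervalIntegrable_Mdensity hα0 hα1).mono_set ?_)
    (fun t ht => Mdensity_pos hα0 (hyp0.trans ht.1.le) ht.2) hyp1
  rw [uIcc_of_le hyp1.le, uIcc_of_le zero_le_one]
  exact Icc_subset_Icc_left hyp0

theorem Mone_eq_MoneExt {p y : ℝ} (hy : 0 ≤ y) (hyp : y ≤ p) : Mone α p y = MoneExt α p y := by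
  rcases (hy.trans hyp).eq_or_lt with rfl | hp
  · obtain rfl := le_antisymm hyp hy
    simp [Mone, MoneExt]
  have hintegrand : ∀ μ ∈ uIcc y p,
      (1 - p ^ (-(2 / α)) * μ ^ (2 / α)) ^ (-α) = Mdensity α (μ / p) := fun μ hμ => by
    rw [uIcc_of_le hyp] at hμ
    rw [Mdensity, div_rpow (hy.trans hμ.1) hp.le, rpow_neg hp.le, inv_mul_eq_div]
  rw [Mone, MoneExt, integral_congr hintegrand, integral_comp_div _ hp.ne', div_self hp.ne',
    projIcc_div_eq hy hyp hp, smul_eq_mul]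

end MoneExt

theorem Mker_succ_eq_volterraIter (α : ℝ) : ∀ n, Mker α (n + 1) = volterraIter (Mone α) n
  | 0 => rfl
  | n + 1 => by
    show (fun p y => ∫ a in y..p, Mone α a y * Mker α (n + 1) p a) = _
    rw [Mker_succ_eq_volterraIter α n]
    rfl

theorem stmt5_general (α : ℝ) (hα0 : 0 < α) (hα1 : α < 1) :
    (∀ R > (0:ℝ),
      TendstoUniformlyOn
        (fun k (q : ℝ × ℝ) => ∑ n ∈ Finset.range k, Mker α (n + 1) q.1 q.2)
        (Nker α) atTop {q : ℝ × ℝ | 0 ≤ q.2 ∧ q.2 ≤ q.1 ∧ q.1 ≤ R} ∧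
      ContinuousOn (Nker α) {q : ℝ × ℝ | 0 ≤ q.2 ∧ q.2 ≤ q.1 ∧ q.1 ≤ R} ∧
      (∀ q ∈ {q : ℝ × ℝ | 0 ≤ q.2 ∧ q.2 ≤ q.1 ∧ q.1 ≤ R}, 0 ≤ Nker α q) ∧
      (∃ C : ℝ, ∀ q ∈ {q : ℝ × ℝ | 0 ≤ q.2 ∧ q.2 ≤ q.1 ∧ q.1 ≤ R}, |Nker α q| ≤ C))
    ∧ (∀ p y : ℝ, 0 ≤ y → y < p → 0 < Nker α (p, y)) := by
  have hK := continuous_MoneExt hα0 hα1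
  have hK0 : ∀ p y, 0 ≤ y → y ≤ p → 0 ≤ MoneExt α p y := fun p y hy hyp =>
    MoneExt_nonneg hα0 hα1 (hy.trans hyp) y
  have hMker : ∀ n p y, 0 ≤ y → y ≤ p → Mker α (n + 1) p y = volterraIter (MoneExt α) n p y :=
    fun n p y hy hyp => by
      rw [Mker_succ_eq_volterraIter]
      exact volterraIter_congr (fun _ _ => Mone_eq_MoneExt) n hy hyp
  have hN : ∀ q : ℝ × ℝ, 0 ≤ q.2 → q.2 ≤ q.1 → Nker α q = volterraSeries (MoneExt α) q :=
    fun q hy hyp => tsum_congr fun n => hMker n _ _ hy hyp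
  refine ⟨fun R _ => ⟨?_, ?_, ?_, ?_⟩, fun p y hy hyp => ?_⟩
  · refine ((tendstoUniformlyOn_volterraSeries hK hK0 R).congr (.of_forall fun k q hq =>
      Finset.sum_congr rfl fun n _ => (hMker n _ _ hq.1 hq.2.1).symm)).congr_right
      fun q hq => (hN q hq.1 hq.2.1).symm
  · exact (continuousOn_volterraSeries hK hK0 R).congr fun q hq => hN q hq.1 hq.2.1
  · exact fun q hq => hN q hq.1 hq.2.1 ▸ volterraSeries_nonneg hK0 hq.1 hq.2.1
  · obtain ⟨C, hC⟩ := exists_abs_volterraSeries_le hK hK0 R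
    exact ⟨C, fun q hq => hN q hq.1 hq.2.1 ▸ hC q hq⟩
  · rw [hN (p, y) hy hyp.le]
    exact volterraSeries_pos hK hK0 hy hyp.le (MoneExt_pos hα0 hα1 hy hyp)

/-- On every `W_R = {(p,y) : 0 ≤ y ≤ p ≤ R}` the series defining `N` converges
uniformly, and `N` is continuous, nonnegative and bounded on `W_R`; moreover
`N(p,y) > 0` whenever `0 ≤ y < p`. -/
theorem stmt5 (α c₁ : ℝ) (hα0 : 0 < α) (hα1 : α < 1) (hc₁ : 0 < c₁) :
    (∀ R > (0:ℝ),
      TendstoUniformlyOn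
        (fun k (q : ℝ × ℝ) => ∑ n ∈ Finset.range k, Mker α (n + 1) q.1 q.2)
        (Nker α) atTop {q : ℝ × ℝ | 0 ≤ q.2 ∧ q.2 ≤ q.1 ∧ q.1 ≤ R} ∧
      ContinuousOn (Nker α) {q : ℝ × ℝ | 0 ≤ q.2 ∧ q.2 ≤ q.1 ∧ q.1 ≤ R} ∧
      (∀ q ∈ {q : ℝ × ℝ | 0 ≤ q.2 ∧ q.2 ≤ q.1 ∧ q.1 ≤ R}, 0 ≤ Nker α q) ∧
      (∃ C : ℝ, ∀ q ∈ {q : ℝ × ℝ | 0 ≤ q.2 ∧ q.2 ≤ q.1 ∧ q.1 ≤ R}, |Nker α q| ≤ C))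
    ∧ (∀ p y : ℝ, 0 ≤ y → y < p → 0 < Nker α (p, y)) :=
  stmt5_general α hα0 hα1
end

section
/- Let α ∈ (0,1), c₀ > 0. Suppose f ∈ C²((c₀,∞)) with f' absolutely continuous near c₀ satisfies (1/Γ(1-α)) ∫_{c₀}^{ξ} (ξ-p)^{-α} f'(p) dp = (2/α)² ξ² f''(ξ) + (2/α)((2/α)+1) ξ f'(ξ) - (ξ-c₀)^{-α}/Γ(1-α) for ξ > c₀. Then lim_{ξ → c₀⁺} (ξ - c₀)^α f''(ξ) = (α/2)² c₀^{-2} / Γ(1-α). -/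
open Real MeasureTheory intervalIntegral Set Filter Topology

/-! Since `f'` is bounded near `c₀`, the Abel integral `∫_{c₀}^{ξ} (ξ-p)^{-α} f'(p) dp` is
`O((ξ-c₀)^{1-α})`. Multiplying the equation by `(ξ-c₀)^α` therefore kills the integral and the
`f'` term in the limit, leaving `(2/α)² c₀² · lim (ξ-c₀)^α f''(ξ) = 1/Γ(1-α)`. -/

theorem norm_integral_rpow_sub_mul_le {a ξ α M : ℝ} {u : ℝ → ℝ} (haξ : a ≤ ξ) (hα : α < 1)
    (hu : ∀ p ∈ Ioc a ξ, ‖u p‖ ≤ M) :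
    ‖∫ p in a..ξ, (ξ - p) ^ (-α) * u p‖ ≤ M * ((ξ - a) ^ (1 - α) / (1 - α)) := by
  have hkernel : ∫ p in a..ξ, (ξ - p) ^ (-α) = (ξ - a) ^ (1 - α) / (1 - α) := by
    rw [integral_comp_sub_left (fun x => x ^ (-α)), sub_self,
      integral_rpow (Or.inl (by linarith)), zero_rpow (by linarith)]
    ring_nf
  have hint : IntervalIntegrable (fun p => M * (ξ - p) ^ (-α)) volume a ξ := by
    simpa using (((intervalIntegrable_rpow' (a := 0) (b := ξ - a)
      (by linarith : -1 < -α)).comp_sub_left ξ).const_mul M).symm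
  calc ‖∫ p in a..ξ, (ξ - p) ^ (-α) * u p‖ ≤ ∫ p in a..ξ, M * (ξ - p) ^ (-α) := by
        refine norm_integral_le_of_norm_le haξ (ae_of_all _ fun p hp => ?_) hint
        have hker : 0 ≤ (ξ - p) ^ (-α) := rpow_nonneg (by linarith [hp.2]) _
        rw [norm_mul, norm_of_nonneg hker, mul_comm]
        exact mul_le_mul_of_nonneg_right (hu p hp) hker
    _ = M * ((ξ - a) ^ (1 - α) / (1 - α)) := by
        rw [intervalIntegral.integral_const_mul, hkernel]

theorem tendsto_sub_nhdsGT_zero (a : ℝ) : Tendsto (fun ξ => ξ - a) (𝓝[>] a) (𝓝 0) := by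
  simpa using ((continuous_sub_right a).tendsto a).mono_left nhdsWithin_le_nhds

theorem tendsto_rpow_sub_mul_nhdsGT_zero {a α L : ℝ} {v : ℝ → ℝ} (hα : 0 < α)
    (hv : Tendsto v (𝓝[>] a) (𝓝 L)) :
    Tendsto (fun ξ => (ξ - a) ^ α * v ξ) (𝓝[>] a) (𝓝 0) := by
  have hpow : Tendsto (fun ξ => (ξ - a) ^ α) (𝓝[>] a) (𝓝 0) := by
    simpa [Function.comp_def, zero_rpow hα.ne'] using
      (continuousAt_rpow_const 0 α (Or.inr hα.le)).tendsto.comp (tendsto_sub_nhdsGT_zero a)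
  simpa using hpow.mul hv

theorem tendsto_rpow_sub_mul_integral_rpow_sub_mul_nhdsGT_zero {a b α M : ℝ} {u : ℝ → ℝ}
    (hab : a < b) (hα : α < 1) (hu : ∀ p ∈ Ioc a b, ‖u p‖ ≤ M) :
    Tendsto (fun ξ => (ξ - a) ^ α * ∫ p in a..ξ, (ξ - p) ^ (-α) * u p) (𝓝[>] a) (𝓝 0) := by
  refine squeeze_zero_norm' (a := fun ξ => M / (1 - α) * (ξ - a)) ?_
    (by simpa using (tendsto_sub_nhdsGT_zero a).const_mul (M / (1 - α)))
  filter_upwards [Ioo_mem_nhdsGT hab] with ξ ⟨haξ, hξb⟩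
  have hpow : 0 ≤ (ξ - a) ^ α := rpow_nonneg (by linarith) _
  calc ‖(ξ - a) ^ α * ∫ p in a..ξ, (ξ - p) ^ (-α) * u p‖
      ≤ (ξ - a) ^ α * (M * ((ξ - a) ^ (1 - α) / (1 - α))) := by
        rw [norm_mul, norm_of_nonneg hpow]
        exact mul_le_mul_of_nonneg_left (norm_integral_rpow_sub_mul_le haξ.le hα
          fun p hp => hu p ⟨hp.1, hp.2.trans hξb.le⟩) hpow
    _ = M / (1 - α) * ((ξ - a) ^ α * (ξ - a) ^ (1 - α)) := by ring
    _ = M / (1 - α) * (ξ - a) := by rw [← rpow_add (by linarith)]; norm_num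

theorem stmt15_general (α c₀ : ℝ) (hα0 : 0 < α) (hα1 : α < 1) (hc₀ : 0 < c₀)
    (f : ℝ → ℝ)
    -- `f'` absolutely continuous on a (right) neighborhood of `c₀`:
    (hAC : ∃ δ > 0, ∃ g : ℝ → ℝ, IntervalIntegrable g volume c₀ (c₀ + δ) ∧
      ContinuousOn (deriv f) (Set.Icc c₀ (c₀ + δ)) ∧
      ∀ x ∈ Set.Icc c₀ (c₀ + δ), deriv f x = deriv f c₀ + ∫ t in c₀..x, g t)
    (heq : ∀ ξ : ℝ, c₀ < ξ →
      (1 / Real.Gamma (1 - α)) * (∫ p in c₀..ξ, (ξ - p) ^ (-α) * deriv f p) =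
        (2/α) ^ 2 * ξ ^ 2 * deriv (deriv f) ξ
          + (2/α) * ((2/α) + 1) * ξ * deriv f ξ
          - (ξ - c₀) ^ (-α) / Real.Gamma (1 - α)) :
    Tendsto (fun ξ => (ξ - c₀) ^ α * deriv (deriv f) ξ) (𝓝[>] c₀)
      (𝓝 ((α/2) ^ 2 * c₀ ^ (-2 : ℝ) / Real.Gamma (1 - α))) := by
  set Γ := Real.Gamma (1 - α)
  obtain ⟨δ, hδ, -, -, hcont, -⟩ := hAC
  obtain ⟨M, hM⟩ := isCompact_Icc.exists_bound_of_continuousOn hcont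
  have hid : Tendsto (fun ξ : ℝ => ξ) (𝓝[>] c₀) (𝓝 c₀) :=
    tendsto_nhdsWithin_of_tendsto_nhds tendsto_id
  have hf' : Tendsto (deriv f) (𝓝[>] c₀) (𝓝 (deriv f c₀)) :=
    (hcont.continuousWithinAt (left_mem_Icc.2 (by linarith))).mono_of_mem_nhdsWithin
      (Icc_mem_nhdsGT (by linarith))
  have hintegral := (tendsto_rpow_sub_mul_integral_rpow_sub_mul_nhdsGT_zero
    (by linarith : c₀ < c₀ + δ) hα1 fun p hp => hM p (Ioc_subset_Icc_self hp)).const_mul (1 / Γ)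
  have hdrift := tendsto_rpow_sub_mul_nhdsGT_zero hα0
    ((hid.const_mul ((2/α) * ((2/α) + 1))).mul hf')
  have hscaled : Tendsto (fun ξ => (ξ - c₀) ^ α * ((2/α) ^ 2 * ξ ^ 2 * deriv (deriv f) ξ))
      (𝓝[>] c₀) (𝓝 (1 / Γ)) := by
    have hlim := (hintegral.sub hdrift).add_const (1 / Γ)
    rw [mul_zero, sub_zero, zero_add] at hlim
    refine hlim.congr' ?_
    filter_upwards [self_mem_nhdsWithin] with ξ (hξ : c₀ < ξ)
    have hcancel : (ξ - c₀) ^ α * (ξ - c₀) ^ (-α) = 1 := by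
      rw [← rpow_add (by linarith), add_neg_cancel, rpow_zero]
    linear_combination (ξ - c₀) ^ α * heq ξ hξ - hcancel / Γ
  have hval : 1 / Γ / ((2/α) ^ 2 * c₀ ^ 2) = (α/2) ^ 2 * c₀ ^ (-2 : ℝ) / Γ := by
    rw [rpow_neg hc₀.le, show (2 : ℝ) = (2 : ℕ) by norm_num, rpow_natCast]
    field_simp
  rw [← hval]
  refine (hscaled.div ((hid.pow 2).const_mul _) (by positivity)).congr' ?_
  filter_upwards [self_mem_nhdsWithin] with ξ (hξ : c₀ < ξ)
  simp only [Pi.div_apply]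
  field_simp [(hc₀.trans hξ).ne']

/-- If `f ∈ C²((c₀,∞))` with `f'` absolutely continuous near `c₀` satisfies the
self-similar equation
`(1/Γ(1-α)) ∫_{c₀}^{ξ}(ξ-p)^{-α} f'(p) dp
  = (2/α)² ξ² f''(ξ) + (2/α)((2/α)+1) ξ f'(ξ) - (ξ-c₀)^{-α}/Γ(1-α)` for `ξ > c₀`,
then `(ξ-c₀)^α f''(ξ) → (α/2)² c₀^{-2}/Γ(1-α)` as `ξ → c₀⁺`. -/
theorem stmt15 (α c₀ : ℝ) (hα0 : 0 < α) (hα1 : α < 1) (hc₀ : 0 < c₀)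
    (f : ℝ → ℝ) (hf : ContDiffOn ℝ 2 f (Set.Ioi c₀))
    -- `f'` absolutely continuous on a (right) neighborhood of `c₀`:
    (hAC : ∃ δ > 0, ∃ g : ℝ → ℝ, IntervalIntegrable g volume c₀ (c₀ + δ) ∧
      ContinuousOn (deriv f) (Set.Icc c₀ (c₀ + δ)) ∧
      ∀ x ∈ Set.Icc c₀ (c₀ + δ), deriv f x = deriv f c₀ + ∫ t in c₀..x, g t)
    (heq : ∀ ξ : ℝ, c₀ < ξ →
      (1 / Real.Gamma (1 - α)) * (∫ p in c₀..ξ, (ξ - p) ^ (-α) * deriv f p) =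
        (2/α) ^ 2 * ξ ^ 2 * deriv (deriv f) ξ
          + (2/α) * ((2/α) + 1) * ξ * deriv f ξ
          - (ξ - c₀) ^ (-α) / Real.Gamma (1 - α)) :
    Tendsto (fun ξ => (ξ - c₀) ^ α * deriv (deriv f) ξ) (𝓝[>] c₀)
      (𝓝 ((α/2) ^ 2 * c₀ ^ (-2 : ℝ) / Real.Gamma (1 - α))) :=
  stmt15_general α c₀ hα0 hα1 hc₀ f hAC heq
end
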